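/- arXiv:2107.11205 — 4 statements merged into one kernel-verified Lean document; each statement's English description precedes it below -/
import Mathlib

section
/- For odd n, there exists a balanced Boolean function on n variables that is (n−1)-th order dual sensitive. Concretely: fix y ∈ F_2^n; the function g defined by g(y^(S)) = 0 for all S of odd size ≤ n−2 and at y itself, g(y^(S)) = 1 for all S of even size with 2 ≤ |S| ≤ n−1, and g(complement of y) = 1, is balanced (takes value 0 on exactly 2^{n−1} inputs) and (n−1)-th order dual sensitive at y. -/
/-- Flip the bits of `x` indexed by `S`. -/
def flipS {ι : Type*} [DecidableEq ι] (x : ι → Bool) (S : Finset ι) : ι → Bool :=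
  fun i => if i ∈ S then !x i else x i

/-!
The witness is `1` exactly at the points whose Hamming distance `d` from `y` is even and
positive, or equal to `n`. For odd `n`, replacing `d` by `n - d` swaps these two classes, so the
witness is self-dual, `g (¬x) = ¬ g x`; complementation then pairs the zeros of `g` with its ones,
which makes `g` balanced. Dual sensitivity at `y` is read off directly from the parity of `d`.
-/

open Finset

variable {ι : Type*} [Fintype ι]

theorem hammingDist_flipS [DecidableEq ι] (y : ι → Bool) (S : Finset ι) :
    hammingDist (flipS y S) y = #S := by
  unfold hammingDist
  congr 1
  ext i
  by_cases hi : i ∈ S <;> simp [flipS, hi]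

theorem hammingDist_not_left (x y : ι → Bool) :
    hammingDist (fun i => !x i) y = Fintype.card ι - hammingDist x y := by
  have hsplit := card_filter_add_card_filter_not (s := univ) (p := fun i => x i ≠ y i)
  have hnot : #{i | (!x i) ≠ y i} = #{i | ¬ x i ≠ y i} := by
    congr 1
    ext i
    cases x i <;> cases y i <;> simp
  rw [card_univ] at hsplit
  simp only [hammingDist, hnot]
  omega

theorem two_mul_card_filter_eq_false_of_map_not [DecidableEq ι]
    (f : (ι → Bool) → Bool) (hf : ∀ x, f (fun i => !x i) = !f x) :
    2 * #{x | f x = false} = 2 ^ Fintype.card ι := by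
  have hswap : #{x | f x = false} = #{x | ¬ f x = false} := by
    refine card_nbij' (fun x i => !x i) (fun x i => !x i) ?_ ?_ ?_ ?_ <;>
      intro x hx <;> simp_all
  have hsplit := card_filter_add_card_filter_not (s := univ) (p := fun x => f x = false)
  rw [card_univ, Fintype.card_fun, Fintype.card_bool] at hsplit
  omega

def dualSensitiveWitness (y x : ι → Bool) : Bool :=
  decide (hammingDist x y = Fintype.card ι ∨ (Even (hammingDist x y) ∧ hammingDist x y ≠ 0))

theorem dualSensitiveWitness_flipS [DecidableEq ι] (y : ι → Bool) (S : Finset ι) :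
    dualSensitiveWitness y (flipS y S) =
      decide (#S = Fintype.card ι ∨ (Even #S ∧ #S ≠ 0)) := by
  rw [dualSensitiveWitness, hammingDist_flipS]

theorem dualSensitiveWitness_not (hι : Odd (Fintype.card ι)) (y x : ι → Bool) :
    dualSensitiveWitness y (fun i => !x i) = !dualSensitiveWitness y x := by
  have hle : hammingDist x y ≤ Fintype.card ι := hammingDist_le_card_fintype
  rw [Nat.odd_iff] at hι
  simp only [dualSensitiveWitness, hammingDist_not_left, Nat.even_iff, ← decide_not,
    decide_eq_decide]
  omega

/-- For odd `n`, there is a balanced `(n-1)`-th order dual sensitive function on `n`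
variables: the function which is `0` at `y` and at all points at odd distance `≤ n-2`
from `y`, is `1` at all points at even distance in `[2, n-1]` from `y`, and is `1`
at the complement of `y`. -/
theorem stmt4 (n : ℕ) (hn : Odd n) (y : Fin n → Bool) :
    ∃ g : (Fin n → Bool) → Bool,
      g y = false ∧
      (∀ S : Finset (Fin n), Odd S.card → S.card ≤ n - 2 → g (flipS y S) = false) ∧
      (∀ S : Finset (Fin n), Even S.card → 2 ≤ S.card → S.card ≤ n - 1 →
        g (flipS y S) = true) ∧
      g (fun i => !y i) = true ∧
      (Finset.univ.filter (fun x : Fin n → Bool => g x = false)).card = 2 ^ (n - 1) ∧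
      (∀ S : Finset (Fin n), 1 ≤ S.card → S.card ≤ n - 1 →
        (Odd S.card → g (flipS y S) = g y) ∧ (Even S.card → g (flipS y S) ≠ g y)) := by
  have hn2 : n % 2 = 1 := Nat.odd_iff.mp hn
  have hdual := dualSensitiveWitness_not (by simpa using hn) y
  have hy : dualSensitiveWitness y y = false := by
    simp [dualSensitiveWitness]
    omega
  have hbalanced := two_mul_card_filter_eq_false_of_map_not _ hdual
  rw [Fintype.card_fin, ← Nat.two_pow_pred_add_two_pow_pred hn.pos] at hbalanced
  refine ⟨dualSensitiveWitness y, hy, fun S hodd hle => ?_, fun S heven h2 hle => ?_,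
    by rw [hdual, hy]; rfl, by omega, fun S h1 hle => ⟨fun hodd => ?_, fun heven => ?_⟩⟩
  all_goals
    rw [dualSensitiveWitness_flipS]
    simp only [Fintype.card_fin, Nat.odd_iff, Nat.even_iff] at *
    simp [hy, -card_eq_zero]
    omega
end

section
/- Let f be a Boolean function of the form f(x,y) = ⊕_{a ∈ F_2^{n1}} (indicator that x = a) · g_a(y), where g_{1^{n1}} = sym^k_{n2} and g_a ≡ 1 for every a with n1 > wt(a) ≥ n1 − k. Then f is k-th order sensitive at the point (1^{n1}, 0^{n2}). -/
/-- Hamming weight of a Boolean vector. -/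
def wt {ι : Type*} [Fintype ι] (x : ι → Bool) : ℕ :=
  (Finset.univ.filter (fun i => x i = true)).card

/-- `sym^k_m(x) = (Σ_{j=1}^k C(wt x, j)) mod 2`. -/
def symk (m k : ℕ) (x : Fin m → Bool) : Bool :=
  decide (Odd (∑ j ∈ Finset.Icc 1 k, (wt x).choose j))
/-! At `(1^{n1}, 0^{n2})` the function takes the value `sym^k(0) = 0`. Flipping a set `S` with
`1 ≤ |S| ≤ k` either leaves the `x`-block untouched, and then `f = sym^k(y)` with
`1 ≤ wt y ≤ k`, which is `1` because `∑_{j=1}^{k} C(w, j) = 2^w - 1` is odd for `1 ≤ w ≤ k`;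
or it flips between `1` and `k` coordinates of `x = 1^{n1}`, landing on some `a` with
`n1 - k ≤ wt a < n1`, where `g_a ≡ 1`. -/

open Finset

theorem Nat.sum_Icc_one_choose_of_le {w k : ℕ} (h : w ≤ k) :
    ∑ j ∈ Icc 1 k, w.choose j = 2 ^ w - 1 := by
  have hrange : ∑ j ∈ range (k + 1), w.choose j = 2 ^ w := by
    rw [← Nat.sum_range_choose w]
    refine (sum_subset (range_subset_range.2 (by omega)) fun j _ hj => ?_).symm
    exact Nat.choose_eq_zero_of_lt (by simpa using hj)
  rw [range_eq_Ico, sum_eq_sum_Ico_succ_bot (by omega : 0 < k + 1), Nat.choose_zero_right,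
    zero_add, Finset.Ico_add_one_right_eq_Icc] at hrange
  omega

theorem symk_of_wt_le {m k : ℕ} {y : Fin m → Bool} (h : wt y ≤ k) :
    symk m k y = decide (wt y ≠ 0) := by
  rw [symk, Nat.sum_Icc_one_choose_of_le h]
  rcases (wt y).eq_zero_or_pos with h0 | h0
  · simp [h0]
  · simp [Nat.odd_sub Nat.one_le_two_pow, Nat.even_pow, h0.ne']

section flipS

variable {ι κ : Type*} [DecidableEq ι] [DecidableEq κ]

@[simp] theorem flipS_empty (x : ι → Bool) : flipS x ∅ = x := by
  funext i; simp [flipS]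

theorem flipS_comp_inl (x : ι ⊕ κ → Bool) (S : Finset (ι ⊕ κ)) :
    flipS x S ∘ Sum.inl = flipS (x ∘ Sum.inl) S.toLeft := by
  funext i; simp [flipS]

theorem flipS_comp_inr (x : ι ⊕ κ → Bool) (S : Finset (ι ⊕ κ)) :
    flipS x S ∘ Sum.inr = flipS (x ∘ Sum.inr) S.toRight := by
  funext i; simp [flipS]

variable [Fintype ι]

theorem wt_flipS_const_true (A : Finset ι) :
    wt (flipS (fun _ => true) A) = Fintype.card ι - #A := by
  rw [wt, ← card_compl]
  congr 1; ext i; simp [flipS]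

theorem wt_flipS_const_false (A : Finset ι) : wt (flipS (fun _ => false) A) = #A := by
  rw [wt]
  congr 1; ext i; simp [flipS]

end flipS

theorem stmt9_general (n1 n2 k : ℕ)
    (g : (Fin n1 → Bool) → (Fin n2 → Bool) → Bool)
    (hone : g (fun _ => true) = symk n2 k)
    (hbig : ∀ a : Fin n1 → Bool, wt a < n1 → n1 - k ≤ wt a → g a = fun _ => true) :
    ∀ S : Finset (Fin n1 ⊕ Fin n2), 1 ≤ S.card → S.card ≤ k →
      g ((flipS (Sum.elim (fun _ => true) (fun _ => false)) S) ∘ Sum.inl)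
        ((flipS (Sum.elim (fun _ => true) (fun _ => false)) S) ∘ Sum.inr) ≠
      g ((Sum.elim (fun _ => true) (fun _ => false) : Fin n1 ⊕ Fin n2 → Bool) ∘ Sum.inl)
        ((Sum.elim (fun _ => true) (fun _ => false) : Fin n1 ⊕ Fin n2 → Bool) ∘ Sum.inr) := by
  intro S hS hSk
  rw [flipS_comp_inl, flipS_comp_inr, Sum.elim_comp_inl, Sum.elim_comp_inr]
  have hbase : g (fun _ => true) (fun _ => false) = false := by
    rw [hone, symk_of_wt_le] <;> simp [wt]
  rw [hbase, ne_eq, Bool.not_eq_false]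
  have hcard := S.card_toLeft_add_card_toRight
  rcases S.toLeft.eq_empty_or_nonempty with hA | hA
  · rw [hA, card_empty, zero_add] at hcard
    rw [hA, flipS_empty, hone, symk_of_wt_le] <;> rw [wt_flipS_const_false]
    · simp only [decide_eq_true_eq]; omega
    · omega
  · have hA1 := hA.card_pos
    have hAn := card_le_univ S.toLeft
    rw [Fintype.card_fin] at hAn
    apply congrFun (hbig _ _ _) <;> rw [wt_flipS_const_true, Fintype.card_fin] <;> omega

/-- The function `f(x,y) = g_x(y)` with `g_{1^{n1}} = sym^k_{n2}` and `g_a ≡ 1` for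
`n1 - k ≤ wt a < n1` is `k`-th order sensitive at `(1^{n1}, 0^{n2})`. -/
theorem stmt9 (n1 n2 k : ℕ) (hk1 : k ≤ n1) (hk2 : k ≤ n2)
    (g : (Fin n1 → Bool) → (Fin n2 → Bool) → Bool)
    (hone : g (fun _ => true) = symk n2 k)
    (hbig : ∀ a : Fin n1 → Bool, wt a < n1 → n1 - k ≤ wt a → g a = fun _ => true) :
    ∀ S : Finset (Fin n1 ⊕ Fin n2), 1 ≤ S.card → S.card ≤ k →
      g ((flipS (Sum.elim (fun _ => true) (fun _ => false)) S) ∘ Sum.inl)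
        ((flipS (Sum.elim (fun _ => true) (fun _ => false)) S) ∘ Sum.inr) ≠
      g ((Sum.elim (fun _ => true) (fun _ => false) : Fin n1 ⊕ Fin n2 → Bool) ∘ Sum.inl)
        ((Sum.elim (fun _ => true) (fun _ => false) : Fin n1 ⊕ Fin n2 → Bool) ∘ Sum.inr) :=
  stmt9_general n1 n2 k g hone hbig
end

section
/- Let f : F_2^s → F_2 and g_1,...,g_s : F_2^u → F_2, and define f̂ : F_2^{us} → F_2 by f̂(x_1,...,x_s) = f(g_1(x_1),...,g_s(x_s)) where each x_i ∈ F_2^u. Then for any w = (w_1,...,w_s) ∈ (F_2^u)^s, the Walsh transform satisfies W_{f̂}(w) = 2^{−s} Σ_{v ∈ F_2^s} W_f(v) ∏_{i=1}^s W_{v_i g_i}(w_i). -/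
/-!
Fourier inversion writes `(-1)^{f(y)}` as `2^{-s} Σ_v W_f(v) (-1)^{v·y}`. Substituting
`y = (g₁(x₁), …, g_s(x_s))` into the Walsh sum of `f̂`, the character
`(-1)^{v·y} (-1)^{w·x}` factors over the blocks `x_i` as `∏_i (-1)^{v_i g_i(x_i) ⊕ w_i·x_i}`,
so the sum over `x` splits into the product of the `W_{v_i g_i}(w_i)`.
-/

/-- Inner product `w · x = ⊕_{i : w_i = 1} x_i`. -/
def dotB {ι : Type*} [Fintype ι] (b y : ι → Bool) : Bool :=
  decide (Odd ((Finset.univ.filter (fun i => b i = true ∧ y i = true)).card))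

/-- Walsh transform `W_h(w) = Σ_x (-1)^{h(x) ⊕ w·x}`. -/
def Wal {ι : Type*} [Fintype ι] [DecidableEq ι] (h : (ι → Bool) → Bool) (w : ι → Bool) : ℤ :=
  ∑ x : ι → Bool, if xor (h x) (dotB w x) then -1 else 1

open Finset

def signB (b : Bool) : ℤ := if b then -1 else 1

lemma signB_xor (a b : Bool) : signB (xor a b) = signB a * signB b := by
  cases a <;> cases b <;> simp [signB]

section Walsh

variable {ι : Type*} [Fintype ι]

lemma signB_dotB (b y : ι → Bool) : signB (dotB b y) = ∏ i, signB (b i && y i) := by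
  classical
  have hprod : ∏ i, signB (b i && y i) = ∏ _i ∈ univ.filter (fun i => b i ∧ y i), (-1 : ℤ) := by
    rw [prod_filter]
    refine prod_congr rfl fun i _ => ?_
    cases b i <;> cases y i <;> simp [signB]
  rw [hprod, prod_const, dotB, signB]
  split_ifs with h
  · exact ((decide_eq_true_iff.mp h).neg_one_pow).symm
  · exact (Nat.not_odd_iff_even.mp (by simpa using h)).neg_one_pow.symm

lemma Wal_eq_sum_signB [DecidableEq ι] (h : (ι → Bool) → Bool) (w : ι → Bool) :
    Wal h w = ∑ x, signB (h x) * signB (dotB w x) := by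
  simp only [Wal, ← signB_xor]
  rfl

lemma sum_signB_dotB_mul_signB_dotB [DecidableEq ι] (x y : ι → Bool) :
    ∑ v : ι → Bool, signB (dotB v x) * signB (dotB v y) =
      if x = y then 2 ^ Fintype.card ι else 0 := by
  have hfactor : ∀ a b : Bool,
      ∑ c : Bool, signB (c && a) * signB (c && b) = if a = b then 2 else 0 := by
    decide
  simp only [signB_dotB, ← prod_mul_distrib]
  rw [← Fintype.prod_sum fun i c => signB (c && x i) * signB (c && y i)]
  simp only [hfactor, Fintype.prod_ite_zero, prod_const, card_univ, funext_iff]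

lemma Wal_inversion [DecidableEq ι] (h : (ι → Bool) → Bool) (y : ι → Bool) :
    2 ^ Fintype.card ι * signB (h y) = ∑ v, Wal h v * signB (dotB v y) := by
  calc 2 ^ Fintype.card ι * signB (h y)
      = ∑ x, signB (h x) * if x = y then 2 ^ Fintype.card ι else 0 := by
        simp [mul_comm]
    _ = ∑ x, ∑ v, signB (h x) * signB (dotB v x) * signB (dotB v y) := by
        simp only [← sum_signB_dotB_mul_signB_dotB, mul_sum, mul_assoc]
    _ = ∑ v, Wal h v * signB (dotB v y) := by
        rw [sum_comm]
        simp only [Wal_eq_sum_signB, sum_mul]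

end Walsh

lemma sum_prod_curry {ι κ α R : Type*} [Fintype ι] [DecidableEq ι] [Fintype κ] [DecidableEq κ]
    [Fintype α] [CommSemiring R] (F : ι → (κ → α) → R) :
    ∑ z : ι × κ → α, ∏ i, F i (fun j => z (i, j)) = ∏ i, ∑ x, F i x := by
  rw [Fintype.prod_sum]
  exact Fintype.sum_equiv (Equiv.curry ι κ α) _ _ fun _ => rfl

lemma signB_dotB_prod {ι κ : Type*} [Fintype ι] [Fintype κ] (w z : ι × κ → Bool) :
    signB (dotB w z) = ∏ i, signB (dotB (fun j => w (i, j)) (fun j => z (i, j))) := by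
  simp only [signB_dotB, Fintype.prod_prod_type]

lemma sum_signB_dotB_comp_mul_signB_dotB {ι κ : Type*} [Fintype ι] [DecidableEq ι]
    [Fintype κ] [DecidableEq κ] (v : ι → Bool) (g : ι → (κ → Bool) → Bool)
    (w : ι × κ → Bool) :
    ∑ z : ι × κ → Bool,
        signB (dotB v fun i => g i fun j => z (i, j)) * signB (dotB w z) =
      ∏ i, Wal (fun x => v i && g i x) (fun j => w (i, j)) := by
  simp only [signB_dotB_prod w, signB_dotB v, ← prod_mul_distrib, Wal_eq_sum_signB]
  exact sum_prod_curry fun i x => signB (v i && g i x) * signB (dotB (fun j => w (i, j)) x)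

/-- Walsh transform of the composition `f̂(x₁,…,x_s) = f(g₁(x₁),…,g_s(x_s))`:
`2^s · W_{f̂}(w) = Σ_v W_f(v) ∏_i W_{v_i g_i}(w_i)`. -/
theorem stmt14 (s u : ℕ) (f : (Fin s → Bool) → Bool)
    (g : Fin s → (Fin u → Bool) → Bool) (w : Fin s × Fin u → Bool) :
    (2 ^ s : ℤ) *
        Wal (fun z : Fin s × Fin u → Bool => f (fun i => g i (fun j => z (i, j)))) w =
      ∑ v : Fin s → Bool,
        Wal f v * ∏ i : Fin s, Wal (fun xi => v i && g i xi) (fun j => w (i, j)) := by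
  calc (2 ^ s : ℤ) *
        Wal (fun z : Fin s × Fin u → Bool => f (fun i => g i (fun j => z (i, j)))) w
      = ∑ z : Fin s × Fin u → Bool,
          2 ^ s * signB (f fun i => g i fun j => z (i, j)) * signB (dotB w z) := by
        simp only [Wal_eq_sum_signB, mul_sum, mul_assoc]
    _ = ∑ z : Fin s × Fin u → Bool, ∑ v, Wal f v *
          (signB (dotB v fun i => g i fun j => z (i, j)) * signB (dotB w z)) := by
        have hinv := Wal_inversion f
        simp only [Fintype.card_fin] at hinv
        simp only [hinv, sum_mul, mul_assoc]
    _ = ∑ v : Fin s → Bool,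
          Wal f v * ∏ i : Fin s, Wal (fun xi => v i && g i xi) (fun j => w (i, j)) := by
        rw [sum_comm]
        simp only [← mul_sum, sum_signB_dotB_comp_mul_signB_dotB]
end

section
/- With f̂(x_1,...,x_s) = f(g_1(x_1),...,g_s(x_s)) where each g_i : F_2^u → F_2 is balanced, for every w = (w_1,...,w_s) we have W_{f̂}(w) = 2^{−s} W_f(v') ∏_{i=1}^s ((1+(−1)^{v'_i})/2 · 2^u + (1−(−1)^{v'_i})/2 · W_{g_i}(w_i)), where v' ∈ F_2^s has v'_i = 1 iff w_i ≠ 0. -/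
def boolSign (b : Bool) : ℤ := if b then -1 else 1

@[simp] lemma boolSign_false : boolSign false = 1 := rfl

lemma boolSign_xor (a b : Bool) : boolSign (xor a b) = boolSign a * boolSign b := by
  cases a <;> cases b <;> rfl

lemma boolSign_and_mul_and (a b c : Bool) :
    boolSign (a && b) * boolSign (a && c) = boolSign (a && xor b c) := by
  cases a <;> cases b <;> cases c <;> rfl

lemma dotB_comm {ι : Type*} [Fintype ι] (b y : ι → Bool) : dotB b y = dotB y b := by
  simp only [dotB, and_comm]

lemma boolSign_dotB {ι : Type*} [Fintype ι] (b y : ι → Bool) :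
    boolSign (dotB b y) = ∏ i, boolSign (b i && y i) := by
  have hfactor : ∀ i, boolSign (b i && y i) = if b i = true ∧ y i = true then -1 else 1 := by
    intro i; cases b i <;> cases y i <;> rfl
  rw [Finset.prod_congr rfl fun i _ => hfactor i, Finset.prod_ite, Finset.prod_const_one,
    mul_one, Finset.prod_const, dotB, boolSign]
  split_ifs with hodd
  · exact (Odd.neg_one_pow (by simpa using hodd)).symm
  · exact (Even.neg_one_pow (Nat.not_odd_iff_even.mp (by simpa using hodd))).symm

lemma boolSign_dotB_mul {ι : Type*} [Fintype ι] (v x y : ι → Bool) :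
    boolSign (dotB v x) * boolSign (dotB v y) = boolSign (dotB v fun i => xor (x i) (y i)) := by
  simp only [boolSign_dotB, ← Finset.prod_mul_distrib, boolSign_and_mul_and]

lemma sum_boolSign_dotB {ι : Type*} [Fintype ι] [DecidableEq ι] (t : ι → Bool) :
    ∑ v : ι → Bool, boolSign (dotB v t) = if ∀ i, t i = false then 2 ^ Fintype.card ι else 0 := by
  have hbool : ∀ c : Bool, ∑ b : Bool, boolSign (b && c) = if c then 0 else 2 := by
    intro c; cases c <;> rfl
  simp only [boolSign_dotB, ← Fintype.prod_sum (f := fun i b => boolSign (b && t i)), hbool]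
  split_ifs with ht
  · simp [ht]
  · obtain ⟨i, hi⟩ := not_forall.mp ht
    exact Finset.prod_eq_zero (Finset.mem_univ i) (by simp [hi])

lemma Wal_eq_sum_boolSign {ι : Type*} [Fintype ι] [DecidableEq ι] (h : (ι → Bool) → Bool)
    (w : ι → Bool) : Wal h w = ∑ x, boolSign (h x) * boolSign (dotB w x) := by
  simp only [Wal, ← boolSign_xor]
  rfl

lemma Wal_const_false {ι : Type*} [Fintype ι] [DecidableEq ι] (w : ι → Bool) :
    Wal (fun _ => false) w = if ∀ i, w i = false then 2 ^ Fintype.card ι else 0 := by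
  simp only [Wal_eq_sum_boolSign, boolSign_false, one_mul, dotB_comm w, sum_boolSign_dotB]

theorem sum_Wal_mul_boolSign_dotB {ι : Type*} [Fintype ι] [DecidableEq ι]
    (f : (ι → Bool) → Bool) (y : ι → Bool) :
    ∑ v, Wal f v * boolSign (dotB v y) = 2 ^ Fintype.card ι * boolSign (f y) := by
  simp only [Wal_eq_sum_boolSign, Finset.sum_mul, mul_assoc, boolSign_dotB_mul]
  rw [Finset.sum_comm]
  simp only [← Finset.mul_sum, sum_boolSign_dotB]
  rw [Finset.sum_eq_single y (fun x _ hxy => by simp [mt funext hxy]) (by simp)]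
  simp [mul_comm]

lemma sum_prod_curry_eq_prod_sum {ι κ β R : Type*} [Fintype ι] [DecidableEq ι] [Fintype κ]
    [DecidableEq κ] [Fintype β] [CommSemiring R] (F : ι → (κ → β) → R) :
    ∑ z : ι × κ → β, ∏ i, F i (fun j => z (i, j)) = ∏ i, ∑ x, F i x := by
  rw [Fintype.prod_sum]
  exact Fintype.sum_equiv (Equiv.curry ι κ β) _ _ fun _ => rfl

theorem two_pow_card_mul_Wal_comp {ι κ : Type*} [Fintype ι] [DecidableEq ι] [Fintype κ]
    [DecidableEq κ] (f : (ι → Bool) → Bool) (g : ι → (κ → Bool) → Bool) (w : ι × κ → Bool) :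
    2 ^ Fintype.card ι * Wal (fun z => f fun i => g i fun j => z (i, j)) w =
      ∑ v, Wal f v * ∏ i, Wal (fun x => v i && g i x) (fun j => w (i, j)) := by
  have hsplit : ∀ (v : ι → Bool) (z : ι × κ → Bool),
      boolSign (dotB v fun i => g i fun j => z (i, j)) * boolSign (dotB w z) =
        ∏ i, boolSign (v i && g i fun j => z (i, j)) *
          boolSign (dotB (fun j => w (i, j)) fun j => z (i, j)) := by
    intro v z
    simp only [boolSign_dotB, Fintype.prod_prod_type, ← Finset.prod_mul_distrib]
  calc 2 ^ Fintype.card ι * Wal (fun z => f fun i => g i fun j => z (i, j)) w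
      = ∑ z, ∑ v, Wal f v *
          (boolSign (dotB v fun i => g i fun j => z (i, j)) * boolSign (dotB w z)) := by
        simp only [Wal_eq_sum_boolSign, Finset.mul_sum, ← mul_assoc, ← sum_Wal_mul_boolSign_dotB,
          Finset.sum_mul]
    _ = ∑ v, Wal f v * ∏ i, Wal (fun x => v i && g i x) (fun j => w (i, j)) := by
        rw [Finset.sum_comm]
        refine Finset.sum_congr rfl fun v _ => ?_
        simp only [← Finset.mul_sum, hsplit, Wal_eq_sum_boolSign]
        rw [sum_prod_curry_eq_prod_sum fun i x =>
          boolSign (v i && g i x) * boolSign (dotB (fun j => w (i, j)) x)]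

section Balanced

variable {κ : Type*} [Fintype κ] [DecidableEq κ] {g : (κ → Bool) → Bool} {w : κ → Bool}
  {b : Bool}

lemma Wal_and_of_iff (hb : b = true ↔ ∃ j, w j = true) :
    Wal (fun x => b && g x) w = if b then Wal g w else 2 ^ Fintype.card κ := by
  cases b
  · have hw : ∀ j, w j = false := by simpa using hb
    simp [Wal_const_false, hw]
  · simp

lemma Wal_and_eq_zero (hg : Wal g (fun _ => false) = 0) (hb : ¬(b = true ↔ ∃ j, w j = true)) :
    Wal (fun x => b && g x) w = 0 := by
  cases b
  · obtain ⟨j, hj⟩ : ∃ j, w j = true := by simpa using hb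
    simp only [Bool.false_and, Wal_const_false]
    exact if_neg fun hw => by simp [hw j] at hj
  · have hw : w = fun _ => false := funext (by simpa using hb)
    simpa [hw] using hg

end Balanced

theorem two_pow_card_mul_Wal_comp_of_balanced {ι κ : Type*} [Fintype ι] [DecidableEq ι]
    [Fintype κ] [DecidableEq κ] (f : (ι → Bool) → Bool) (g : ι → (κ → Bool) → Bool)
    (hbal : ∀ i, Wal (g i) (fun _ => false) = 0) (w : ι × κ → Bool) (v : ι → Bool)
    (hv : ∀ i, v i = true ↔ ∃ j, w (i, j) = true) :
    2 ^ Fintype.card ι * Wal (fun z => f fun i => g i fun j => z (i, j)) w =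
      Wal f v * ∏ i, if v i then Wal (g i) (fun j => w (i, j)) else 2 ^ Fintype.card κ := by
  rw [two_pow_card_mul_Wal_comp, Finset.sum_eq_single v _ (by simp)]
  · simp only [Wal_and_of_iff (hv _)]
  intro v' _ hv'
  obtain ⟨i, hi⟩ := Function.ne_iff.mp hv'
  have hsupp : ¬(v' i = true ↔ ∃ j, w (i, j) = true) := fun h =>
    hi (Bool.eq_iff_iff.mpr (h.trans (hv i).symm))
  rw [Finset.prod_eq_zero (Finset.mem_univ i) (Wal_and_eq_zero (hbal i) hsupp), mul_zero]

/-- Walsh transform of a composition with balanced inner functions: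
`2^s W_{f̂}(w) = W_f(v') ∏_i ((1+(-1)^{v'_i})/2 · 2^u + (1-(-1)^{v'_i})/2 · W_{g_i}(w_i))`
where `v'_i = 1` iff `w_i ≠ 0`. -/
theorem stmt15 (s u : ℕ) (f : (Fin s → Bool) → Bool)
    (g : Fin s → (Fin u → Bool) → Bool)
    (hbal : ∀ i, Wal (g i) (fun _ => false) = 0) (w : Fin s × Fin u → Bool) :
    (2 ^ s : ℚ) *
        (Wal (fun z : Fin s × Fin u → Bool => f (fun i => g i (fun j => z (i, j)))) w : ℚ) =
      (Wal f (fun i => decide (∃ j, w (i, j) = true)) : ℚ) *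
        ∏ i : Fin s,
          ((1 + (if (∃ j, w (i, j) = true) then (-1 : ℚ) else 1)) / 2 * 2 ^ u +
            (1 - (if (∃ j, w (i, j) = true) then (-1 : ℚ) else 1)) / 2 *
              (Wal (g i) (fun j => w (i, j)) : ℚ)) := by
  have hcomp := congrArg (Int.cast : ℤ → ℚ) <|
    two_pow_card_mul_Wal_comp_of_balanced f g hbal w _ fun i => decide_eq_true_iff
  push_cast [Fintype.card_fin] at hcomp
  rw [hcomp]
  congr 1
  refine Fintype.prod_congr _ _ fun i => ?_
  by_cases hw : ∃ j, w (i, j) = true <;> simp [hw]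
end
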